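/- arXiv:2509.10261 — 2 statements merged into one kernel-verified Lean document; each statement's English description precedes it below -/
import Mathlib

section
/- The Cartesian product K_{2,3} □ P_2 contains the complete bipartite graph K_{3,3} as a minor. -/
/-- `H` is a minor of `G`: there is an assignment of pairwise disjoint, connected,
nonempty branch sets in `G` to the vertices of `H`, with an edge of `G` between the
branch sets of any two adjacent vertices of `H`. -/
def SimpleGraph.IsMinorOf {W V : Type*} (H : SimpleGraph W) (G : SimpleGraph V) : Prop :=
  ∃ φ : W → Set V,
    (∀ w, (G.induce (φ w)).Connected) ∧
    (Pairwise fun w w' => Disjoint (φ w) (φ w')) ∧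
    ∀ ⦃w w'⦄, H.Adj w w' → ∃ a ∈ φ w, ∃ b ∈ φ w', G.Adj a b

lemma induce_singleton_connected {V : Type*} (G : SimpleGraph V) (a : V) :
    (G.induce ({a} : Set V)).Connected := by
  haveI : Nonempty ({a} : Set V) := ⟨⟨a, rfl⟩⟩
  refine SimpleGraph.Connected.mk fun u v => ?_
  have : u = v := Subtype.ext (u.2.trans v.2.symm)
  subst this; rfl

lemma induce_pair_connected {V : Type*} (G : SimpleGraph V) {a b : V} (h : G.Adj a b) :
    (G.induce ({a, b} : Set V)).Connected := by
  haveI : Nonempty ({a, b} : Set V) := ⟨⟨a, Or.inl rfl⟩⟩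
  have hadj : (G.induce ({a, b} : Set V)).Adj ⟨a, Or.inl rfl⟩ ⟨b, Or.inr rfl⟩ := h
  refine SimpleGraph.Connected.mk fun u v => ?_
  rcases u.2 with hu | hu <;> rcases v.2 with hv | hv
  · have : u = v := Subtype.ext (hu.trans hv.symm); subst this; rfl
  · have hu' : u = ⟨a, Or.inl rfl⟩ := Subtype.ext hu
    have hv' : v = ⟨b, Or.inr rfl⟩ := Subtype.ext hv
    rw [hu', hv']; exact hadj.reachable
  · have hu' : u = ⟨b, Or.inr rfl⟩ := Subtype.ext hu
    have hv' : v = ⟨a, Or.inl rfl⟩ := Subtype.ext hv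
    rw [hu', hv']; exact hadj.symm.reachable
  · have : u = v := Subtype.ext (hu.trans hv.symm); subst this; rfl

/-- The Cartesian product `K_{2,3} □ P_2` contains `K_{3,3}` as a minor. -/
theorem k23_boxProd_p2_hasMinor_k33 :
    (completeBipartiteGraph (Fin 3) (Fin 3)).IsMinorOf
      ((completeBipartiteGraph (Fin 2) (Fin 3)) □ (SimpleGraph.pathGraph 2)) := by
  classical
  set G := (completeBipartiteGraph (Fin 2) (Fin 3)) □ (SimpleGraph.pathGraph 2) with hG
  -- left vertex i of K₃,₃ ↦ singleton branch set; right vertex j ↦ a vertical edge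
  let L : Fin 3 → (Fin 2 ⊕ Fin 3) × Fin 2 := ![(Sum.inl 0, 0), (Sum.inl 1, 0), (Sum.inl 0, 1)]
  let φ : Fin 3 ⊕ Fin 3 → Set ((Fin 2 ⊕ Fin 3) × Fin 2) := fun w =>
    match w with
    | Sum.inl i => {L i}
    | Sum.inr j => {(Sum.inr j, 0), (Sum.inr j, 1)}
  have hP2 : (SimpleGraph.pathGraph 2).Adj 0 1 :=
    SimpleGraph.pathGraph_adj.mpr (Or.inl rfl)
  have hedge : ∀ (i : Fin 3) (j : Fin 3), G.Adj (L i) (Sum.inr j, (L i).2) := by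
    intro i j
    fin_cases i <;> exact Or.inl ⟨Or.inl ⟨rfl, rfl⟩, rfl⟩
  refine ⟨φ, ?_, ?_, ?_⟩
  · rintro (i | j)
    · exact induce_singleton_connected _ _
    · exact induce_pair_connected _ (Or.inr ⟨hP2, rfl⟩)
  · rintro (i | i) (j | j) hne <;> simp only [φ]
    · have hij : i ≠ j := fun h => hne (by rw [h])
      fin_cases i <;> fin_cases j <;> simp_all [L, Set.disjoint_singleton, Prod.ext_iff]
    · fin_cases i <;> fin_cases j <;>
        simp [L, Set.disjoint_left, Prod.ext_iff]
    · fin_cases i <;> fin_cases j <;>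
        simp [L, Set.disjoint_left, Prod.ext_iff]
    · have hij : i ≠ j := fun h => hne (by rw [h])
      fin_cases i <;> fin_cases j <;>
        simp_all [Set.disjoint_left, Prod.ext_iff] <;> decide
  · rintro (i | i) (j | j) hadj
    · simp at hadj
    · refine ⟨L i, rfl, (Sum.inr j, (L i).2), ?_, hedge i j⟩
      fin_cases i
      · exact Or.inl rfl
      · exact Or.inl rfl
      · exact Or.inr rfl
    · refine ⟨(Sum.inr i, (L j).2), ?_, L j, rfl, (hedge j i).symm⟩
      fin_cases j
      · exact Or.inl rfl
      · exact Or.inl rfl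
      · exact Or.inr rfl
    · simp at hadj
end

section
/- Among the four graphs C_3 □ C_3, K_{1,3} □ P_3, K_{2,3} □ P_2, and K_4 □ P_2, no one of them is a minor of any other: for any two distinct graphs G and G' from this list, G' is not a minor of G. (This is the necessity part of the paper's Proposition on forbidden Cartesian product minors for planarity.) -/
/-- `C_3 □ C_3`. -/
abbrev GraphA : SimpleGraph (Fin 3 × Fin 3) :=
  (SimpleGraph.cycleGraph 3) □ (SimpleGraph.cycleGraph 3)

/-- `K_{1,3} □ P_3`. -/
abbrev GraphB : SimpleGraph ((Fin 1 ⊕ Fin 3) × Fin 3) :=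
  (completeBipartiteGraph (Fin 1) (Fin 3)) □ (SimpleGraph.pathGraph 3)

/-- `K_{2,3} □ P_2`. -/
abbrev GraphC : SimpleGraph ((Fin 2 ⊕ Fin 3) × Fin 2) :=
  (completeBipartiteGraph (Fin 2) (Fin 3)) □ (SimpleGraph.pathGraph 2)

/-- `K_4 □ P_2`. -/
abbrev GraphD : SimpleGraph (Fin 4 × Fin 2) :=
  (SimpleGraph.completeGraph (Fin 4)) □ (SimpleGraph.pathGraph 2)

open Finset

namespace SimpleGraph

instance (n : ℕ) : DecidableRel (pathGraph n).Adj :=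
  fun _ _ => decidable_of_iff' _ pathGraph_adj

instance {α β : Type*} [DecidableEq α] [DecidableEq β] (G : SimpleGraph α) (H : SimpleGraph β)
    [DecidableRel G.Adj] [DecidableRel H.Adj] : DecidableRel (G □ H).Adj :=
  fun _ _ => decidable_of_iff' _ boxProd_adj

instance {α β : Type*} : DecidableRel (completeBipartiteGraph α β).Adj :=
  fun _ _ => inferInstanceAs (Decidable (_ ∨ _))

variable {W V : Type*} {H : SimpleGraph W} {G : SimpleGraph V}

structure MinorModel (H : SimpleGraph W) (G : SimpleGraph V) where
  branch : W → Finset V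
  connected_induce : ∀ w, (G.induce (branch w : Set V)).Connected
  pairwise_disjoint : Pairwise fun w w' => Disjoint (branch w) (branch w')
  exists_adj : ∀ ⦃w w'⦄, H.Adj w w' → ∃ a ∈ branch w, ∃ b ∈ branch w', G.Adj a b

theorem IsMinorOf.nonempty_minorModel [Finite V] (h : H.IsMinorOf G) :
    Nonempty (H.MinorModel G) := by
  classical
  have := Fintype.ofFinite V
  obtain ⟨φ, hconn, hdisj, hadj⟩ := h
  exact ⟨⟨fun w => (φ w).toFinset, fun w => by rw [Set.coe_toFinset]; exact hconn w,
    fun w w' hne => by simpa using hdisj hne, by simpa using hadj⟩⟩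

namespace MinorModel

variable (M : H.MinorModel G) {a v x : V} {w w' : W}

theorem branch_nonempty (w : W) : (M.branch w).Nonempty := by
  obtain ⟨⟨v, hv⟩⟩ := (M.connected_induce w).nonempty
  exact ⟨v, hv⟩

theorem eq_of_mem_branch (h : v ∈ M.branch w) (h' : v ∈ M.branch w') : w = w' := by
  by_contra hne
  exact Finset.disjoint_left.1 (M.pairwise_disjoint hne) h h'

theorem exists_adj_of_mem_branch (hv : v ∈ M.branch w) (hne : M.branch w ≠ {v}) :
    ∃ u ∈ M.branch w, G.Adj v u := by
  obtain ⟨u, hu, huv⟩ : ∃ u ∈ M.branch w, u ≠ v := by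
    by_contra! h
    exact hne (Finset.eq_singleton_iff_unique_mem.2 ⟨hv, h⟩)
  have : Nontrivial (M.branch w : Set V) := ⟨⟨⟨v, hv⟩, ⟨u, hu⟩, by simpa using huv.symm⟩⟩
  obtain ⟨⟨u', hu'⟩, hadj⟩ :=
    (M.connected_induce w).preconnected.exists_adj_of_nontrivial ⟨v, hv⟩
  exact ⟨u', hu', hadj⟩

theorem sum_card_branch_le [Fintype W] [Fintype V] : ∑ w, #(M.branch w) ≤ Fintype.card V := by
  classical
  rw [← card_biUnion fun w _ w' _ hne => M.pairwise_disjoint hne]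
  exact card_le_univ _

open Classical in
noncomputable def singletons [Fintype V] : Finset V := {v | ∃ w, M.branch w = {v}}

theorem mem_singletons [Fintype V] : v ∈ M.singletons ↔ ∃ w, M.branch w = {v} := by
  simp [singletons]

theorem card_singletons [Fintype W] [Fintype V] :
    #M.singletons = #{w | #(M.branch w) = 1} := by
  classical
  have : M.singletons = ({w | #(M.branch w) = 1} : Finset W).biUnion M.branch := by
    ext v
    simp only [mem_singletons, mem_biUnion, mem_filter, mem_univ, true_and, card_eq_one]
    constructor
    · rintro ⟨w, hw⟩
      exact ⟨w, ⟨v, hw⟩, by simp [hw]⟩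
    · rintro ⟨w, ⟨u, hu⟩, hv⟩
      exact ⟨w, by rw [hu] at hv ⊢; rw [mem_singleton.1 hv]⟩
  rw [this, card_biUnion fun w _ w' _ hne => M.pairwise_disjoint hne]
  exact (sum_congr rfl fun w hw => (mem_filter.1 hw).2).trans (by simp)

theorem card_singletons_le [Fintype W] [Fintype V] : #M.singletons ≤ Fintype.card W :=
  M.card_singletons ▸ card_filter_le _ _

theorem two_mul_card_le [Fintype W] [Fintype V] :
    2 * Fintype.card W ≤ Fintype.card V + #M.singletons := by
  classical
  have hbranch (w : W) : 2 ≤ #(M.branch w) + if #(M.branch w) = 1 then 1 else 0 := by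
    have := (M.branch_nonempty w).card_pos
    split_ifs <;> omega
  calc 2 * Fintype.card W = ∑ _w : W, 2 := by simp [mul_comm]
    _ ≤ ∑ w, (#(M.branch w) + if #(M.branch w) = 1 then 1 else 0) :=
        sum_le_sum fun w _ => hbranch w
    _ = ∑ w, #(M.branch w) + #M.singletons := by
      rw [sum_add_distrib, ← sum_filter, M.card_singletons, card_eq_sum_ones]
    _ ≤ Fintype.card V + #M.singletons := by gcongr; exact M.sum_card_branch_le

theorem exists_injOn_forall_adj_mem_branch (hw : M.branch w = {v}) :
    ∃ f : W → V, Set.InjOn f (H.neighborSet w) ∧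
      ∀ w', H.Adj w w' → G.Adj v (f w') ∧ f w' ∈ M.branch w' := by
  have hrep (w') (hw' : H.Adj w w') : ∃ b, G.Adj v b ∧ b ∈ M.branch w' := by
    obtain ⟨a, ha, b, hb, hab⟩ := M.exists_adj hw'
    rw [hw, mem_singleton] at ha
    exact ⟨b, ha ▸ hab, hb⟩
  have : Nonempty V := ⟨v⟩
  choose! f hf using hrep
  exact ⟨f, fun w₁ h₁ w₂ h₂ h => M.eq_of_mem_branch (hf w₁ h₁).2 (h ▸ (hf w₂ h₂).2), hf⟩

section Degree

variable [Fintype W] [Fintype V] [DecidableRel H.Adj] [DecidableRel G.Adj]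

theorem degree_le_of_branch_eq_singleton (hw : M.branch w = {v}) : H.degree w ≤ G.degree v := by
  obtain ⟨f, hinj, hf⟩ := M.exists_injOn_forall_adj_mem_branch hw
  rw [← card_neighborFinset_eq_degree, ← card_neighborFinset_eq_degree]
  refine card_le_card_of_injOn f (fun w' hw' => ?_) (by simpa using hinj)
  simpa using (hf w' (by simpa using hw')).1

theorem exists_mem_branch_unique_of_adj (hw : M.branch w = {v}) (hdeg : G.degree v ≤ H.degree w)
    (hx : G.Adj v x) : ∃ w', x ∈ M.branch w' ∧ ∀ y ∈ M.branch w', G.Adj v y → y = x := by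
  classical
  obtain ⟨f, hinj, hf⟩ := M.exists_injOn_forall_adj_mem_branch hw
  -- the degree bound turns the injection of neighbourhoods into a bijection
  have himage : (H.neighborFinset w).image f = G.neighborFinset v := by
    refine eq_of_subset_of_card_le (fun y hy => ?_) ?_
    · obtain ⟨w', hw', rfl⟩ := mem_image.1 hy
      simpa using (hf w' (by simpa using hw')).1
    · rwa [card_image_of_injOn (by simpa using hinj), card_neighborFinset_eq_degree,
        card_neighborFinset_eq_degree]
  have hsurj (y) (hy : G.Adj v y) : ∃ w', H.Adj w w' ∧ f w' = y := by
    have : y ∈ (H.neighborFinset w).image f := himage ▸ (G.mem_neighborFinset v y).2 hy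
    simpa using this
  obtain ⟨w', hw', rfl⟩ := hsurj x hx
  refine ⟨w', (hf w' hw').2, fun y hy hvy => ?_⟩
  obtain ⟨w'', hw'', rfl⟩ := hsurj y hvy
  rw [M.eq_of_mem_branch (hf w'' hw'').2 hy]

variable {d : ℕ}

theorem exists_mem_branch_unique_of_mem_singletons (hG : ∀ v, G.degree v ≤ d)
    (hH : ∀ w, d ≤ H.degree w) (hv : v ∈ M.singletons) (hx : G.Adj v x) :
    ∃ w', x ∈ M.branch w' ∧ ∀ y ∈ M.branch w', G.Adj v y → y = x := by
  obtain ⟨w, hw⟩ := M.mem_singletons.1 hv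
  exact M.exists_mem_branch_unique_of_adj hw ((hG v).trans (hH w)) hx

theorem exists_adj_not_mem_singletons (hG : ∀ v, G.degree v ≤ d) (hH : ∀ w, d ≤ H.degree w)
    (hisol : ∀ v, ∃ u, G.Adj v u) (ha : a ∉ M.singletons) :
    ∃ b ∉ M.singletons, G.Adj a b ∧ ∀ w, a ∈ M.branch w → b ∈ M.branch w := by
  by_cases hcov : ∃ w, a ∈ M.branch w
  · obtain ⟨w, haw⟩ := hcov
    obtain ⟨b, hbw, hab⟩ :=
      M.exists_adj_of_mem_branch haw fun hw => ha (M.mem_singletons.2 ⟨w, hw⟩)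
    refine ⟨b, fun hb => ?_, hab, fun w' haw' => M.eq_of_mem_branch haw haw' ▸ hbw⟩
    obtain ⟨w', hw'⟩ := M.mem_singletons.1 hb
    obtain rfl := M.eq_of_mem_branch hbw (hw' ▸ mem_singleton_self b)
    exact hab.ne (mem_singleton.1 (hw' ▸ haw))
  · simp only [not_exists] at hcov
    obtain ⟨b, hab⟩ := hisol a
    refine ⟨b, fun hb => ?_, hab, fun w haw => (hcov w haw).elim⟩
    obtain ⟨w, haw, -⟩ := M.exists_mem_branch_unique_of_mem_singletons hG hH hb hab.symm
    exact hcov w haw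

theorem card_singletons_add_three_le (hG : ∀ v, G.degree v ≤ d) (hH : ∀ w, d ≤ H.degree w)
    (hisol : ∀ v, ∃ u, G.Adj v u) (htri : ∀ a b, G.Adj a b → ∃ c, G.Adj a c ∧ G.Adj b c)
    (ha : a ∉ M.singletons) : #M.singletons + 3 ≤ Fintype.card V := by
  classical
  obtain ⟨b, hb, hab, hba⟩ := M.exists_adj_not_mem_singletons hG hH hisol ha
  obtain ⟨c, hac, hbc⟩ := htri a b hab
  have hc : c ∉ M.singletons := fun hc => by
    obtain ⟨w, haw, huniq⟩ := M.exists_mem_branch_unique_of_mem_singletons hG hH hc hac.symm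
    exact hab.ne (huniq b (hba w haw) hbc.symm).symm
  calc #M.singletons + 3 = #(insert a (insert b (insert c M.singletons))) := by
        rw [card_insert_of_notMem (by simp [hab.ne, hac.ne, ha]),
          card_insert_of_notMem (by simp [hbc.ne, hb]), card_insert_of_notMem hc]
    _ ≤ Fintype.card V := card_le_univ _

end Degree

end MinorModel

variable [Fintype W] [Fintype V]

theorem IsMinorOf.card_le (h : H.IsMinorOf G) : Fintype.card W ≤ Fintype.card V := by
  obtain ⟨M⟩ := h.nonempty_minorModel
  have := M.two_mul_card_le
  have := M.card_singletons_le
  omega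

theorem IsMinorOf.two_mul_card_le [DecidableRel H.Adj] [DecidableRel G.Adj] (h : H.IsMinorOf G)
    {d : ℕ} (hH : ∀ w, d ≤ H.degree w) :
    2 * Fintype.card W ≤ Fintype.card V + #{v | d ≤ G.degree v} := by
  obtain ⟨M⟩ := h.nonempty_minorModel
  refine M.two_mul_card_le.trans (Nat.add_le_add_left (card_le_card fun v hv => ?_) _)
  obtain ⟨w, hw⟩ := M.mem_singletons.1 hv
  simpa using (hH w).trans (M.degree_le_of_branch_eq_singleton hw)

theorem not_isMinorOf_of_card_eq_add_one [DecidableRel H.Adj] [DecidableRel G.Adj] {d : ℕ}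
    (hG : ∀ v, G.degree v ≤ d) (hH : ∀ w, d ≤ H.degree w) (hisol : ∀ v, ∃ u, G.Adj v u)
    (htri : ∀ a b, G.Adj a b → ∃ c, G.Adj a c ∧ G.Adj b c)
    (hcard : Fintype.card V = Fintype.card W + 1) : ¬ H.IsMinorOf G := by
  intro h
  obtain ⟨M⟩ := h.nonempty_minorModel
  obtain ⟨a, ha⟩ : ∃ a, a ∉ M.singletons := by
    by_contra! hall
    have := (eq_univ_iff_forall.2 hall ▸ M.card_singletons_le : #(univ : Finset V) ≤ _)
    rw [card_univ] at this
    omega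
  have := M.card_singletons_add_three_le hG hH hisol htri ha
  have := M.two_mul_card_le
  omega

end SimpleGraph

/-- Among the four graphs `C_3 □ C_3`, `K_{1,3} □ P_3`, `K_{2,3} □ P_2`, and
`K_4 □ P_2`, no one of them is a minor of any other. -/
theorem forb_cp_plane_antichain :
    (¬ GraphB.IsMinorOf GraphA) ∧ (¬ GraphC.IsMinorOf GraphA) ∧
    (¬ GraphD.IsMinorOf GraphA) ∧ (¬ GraphA.IsMinorOf GraphB) ∧
    (¬ GraphC.IsMinorOf GraphB) ∧ (¬ GraphD.IsMinorOf GraphB) ∧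
    (¬ GraphA.IsMinorOf GraphC) ∧ (¬ GraphB.IsMinorOf GraphC) ∧
    (¬ GraphD.IsMinorOf GraphC) ∧ (¬ GraphA.IsMinorOf GraphD) ∧
    (¬ GraphB.IsMinorOf GraphD) ∧ (¬ GraphC.IsMinorOf GraphD) := by
  refine ⟨fun h => absurd h.card_le (by decide), fun h => absurd h.card_le (by decide),
    SimpleGraph.not_isMinorOf_of_card_eq_add_one (d := 4) (by decide) (by decide) (by decide)
      (by decide) rfl,
    fun h => absurd (h.two_mul_card_le (d := 4) (by decide)) (by decide),
    fun h => absurd (h.two_mul_card_le (d := 3) (by decide)) (by decide),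
    fun h => absurd (h.two_mul_card_le (d := 4) (by decide)) (by decide),
    fun h => absurd (h.two_mul_card_le (d := 4) (by decide)) (by decide),
    fun h => absurd h.card_le (by decide),
    fun h => absurd (h.two_mul_card_le (d := 4) (by decide)) (by decide),
    fun h => absurd h.card_le (by decide), fun h => absurd h.card_le (by decide),
    fun h => absurd h.card_le (by decide)⟩
end
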